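/- arXiv:1010.2525 — 7 statements merged into one kernel-verified Lean document; each statement's English description precedes it below -/
import Mathlib

section
/- Let p be a prime and let 0 ≤ α ≤ β and k ≥ 0 be integers. Then the binomial coefficient C(p^α + p^β, p^k) is congruent modulo p to: 2 if k = α = β; 1 if α < β and (k = α or k = β); 1 if p = 2 and α = β = k − 1; and 0 in all other cases. -/
/-!
Over `𝔽_p`, `(X + 1)^(p^α + p^β) = (X^(p^α) + 1)(X^(p^β) + 1)` by the Frobenius, so
`C(p^α + p^β, n)` is the number of ways to write `n` as one of `0`, `p^α`, `p^β`, `p^α + p^β`.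
For `n = p^k` only the last needs thought: `p^β < p^α + p^β < p^(β+1)` unless `p = 2` and `α = β`.
-/

open Polynomial

theorem Nat.pow_eq_pow_add_pow_iff {p a b k : ℕ} (hp : 1 < p) (hab : a ≤ b) :
    p ^ k = p ^ a + p ^ b ↔ p = 2 ∧ a = b ∧ k = b + 1 := by
  refine ⟨fun h => ?_, fun ⟨hp2, hab, hk⟩ => by subst hp2 hab hk; ring⟩
  by_cases hcase : p = 2 ∧ a = b
  · obtain ⟨rfl, rfl⟩ := hcase
    exact ⟨rfl, rfl, (Nat.pow_right_inj hp).1 (by rw [h, pow_succ]; ring)⟩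
  have hpa : 0 < p ^ a := pow_pos (by omega) a
  have hlow : p ^ b < p ^ k := by omega
  have hhigh : p ^ k < p ^ (b + 1) := by
    rw [h, pow_succ]
    rcases hab.lt_or_eq with hlt | rfl
    · have := (Nat.pow_lt_pow_iff_right hp).2 hlt
      nlinarith
    · have : 3 ≤ p := by omega
      nlinarith
  rw [Nat.pow_lt_pow_iff_right hp] at hlow hhigh
  omega

theorem Nat.cast_choose_pow_add_pow {R : Type*} [CommSemiring R] (p : ℕ) [ExpChar R p]
    (a b n : ℕ) :
    ((p ^ a + p ^ b).choose n : R) =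
      (if n = p ^ a + p ^ b then 1 else 0) + (if n = p ^ a then 1 else 0) +
        (if n = p ^ b then 1 else 0) + (if n = 0 then 1 else 0) := by
  have hfrob : (X + 1 : R[X]) ^ (p ^ a + p ^ b) =
      X ^ (p ^ a + p ^ b) + X ^ p ^ a + X ^ p ^ b + 1 := by
    rw [pow_add, add_pow_expChar_pow, add_pow_expChar_pow, one_pow, one_pow]
    ring
  rw [← coeff_X_add_one_pow, hfrob]
  simp only [coeff_add, coeff_X_pow, coeff_one]

/-- Binomial-coefficient form of Lemma 3.1: for a prime `p` and `0 ≤ α ≤ β`, `k ≥ 0`, the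
binomial coefficient `C(p^α + p^β, p^k)` modulo `p` is `2` if `k = α = β`; `1` if `α < β`
and (`k = α` or `k = β`); `1` if `p = 2` and `α = β = k − 1`; and `0` otherwise. -/
theorem choose_sum_prime_powers_mod (p : ℕ) (hp : p.Prime) (α β k : ℕ) (hαβ : α ≤ β) :
    Nat.choose (p ^ α + p ^ β) (p ^ k) ≡
      (if k = α ∧ α = β then 2
       else if α < β ∧ (k = α ∨ k = β) then 1
       else if p = 2 ∧ α = β ∧ k = β + 1 then 1
       else 0) [MOD p] := by
  have : Fact p.Prime := ⟨hp⟩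
  rw [← ZMod.natCast_eq_natCast_iff, Nat.cast_choose_pow_add_pow]
  simp only [Nat.pow_eq_pow_add_pow_iff hp.one_lt hαβ, Nat.pow_right_inj hp.one_lt,
    pow_ne_zero k hp.ne_zero, if_false]
  split_ifs <;> first | omega | norm_num
end

section
/- Let K be a field of prime characteristic p and for k ≥ 0 set τ_k = Σ_{r=0}^{k} X^{(p+1)p^r} ∈ K[X]. Then ∂_{p^k}(τ_k) = X^p if k = 0, and ∂_{p^k}(τ_k) = X^{p^{k+1}} + X^{p^{k−1}} if k ≥ 1. (This is Lemma 4.1(a) of the paper, stated for τ_k = −σ_k; the overall sign does not affect any of the paper's conclusions.) -/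
/-!
By Lucas' theorem, `(p ^ s * a).choose (p ^ s * b) ≡ a.choose b [MOD p]`, so in characteristic `p`
the derivative `∂_{p^k}` sends `X ^ ((p + 1) * p ^ r)` to `(p + 1) • X ^ (p ^ (r + 1)) = X ^ (p ^ (r + 1))`
when `r = k` and to `(p + 1) • X ^ (p ^ r) = X ^ (p ^ r)` when `r + 1 = k`; the terms with `r + 1 < k`
have degree `(p + 1) * p ^ r < p ^ k` and are killed.
-/

open Polynomial

namespace Polynomial

variable {R : Type*} [Semiring R]

theorem hasseDeriv_X_pow (n k : ℕ) :
    hasseDeriv k (X ^ n : R[X]) = C (n.choose k : R) * X ^ (n - k) := by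
  rw [← monomial_one_right_eq_X_pow, hasseDeriv_monomial, mul_one, C_mul_X_pow_eq_monomial]

theorem hasseDeriv_X_pow_eq_zero_of_lt {n k : ℕ} (h : n < k) : hasseDeriv k (X ^ n : R[X]) = 0 :=
  hasseDeriv_eq_zero_of_lt_natDegree _ _ (natDegree_X_pow_le n |>.trans_lt h)

variable (p : ℕ) [Fact p.Prime] [CharP R p]

theorem hasseDeriv_prime_pow_mul_X_pow_prime_pow_mul (s a b : ℕ) :
    hasseDeriv (p ^ s * b) (X ^ (p ^ s * a) : R[X]) = C (a.choose b : R) * X ^ (p ^ s * (a - b)) := by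
  rw [hasseDeriv_X_pow, ← Nat.mul_sub,
    CharP.natCast_eq_natCast' R p Choose.choose_pow_mul_pow_mul_modEq_choose_nat]

theorem hasseDeriv_prime_pow_X_pow_succ_mul_prime_pow (r : ℕ) :
    hasseDeriv (p ^ r) (X ^ ((p + 1) * p ^ r) : R[X]) = X ^ p ^ (r + 1) := by
  have h := hasseDeriv_prime_pow_mul_X_pow_prime_pow_mul (R := R) p r (p + 1) 1
  rw [mul_one, Nat.choose_one_right, Nat.add_sub_cancel, ← pow_succ] at h
  rw [mul_comm, h]
  simp

theorem hasseDeriv_prime_pow_succ_X_pow_succ_mul_prime_pow (r : ℕ) :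
    hasseDeriv (p ^ (r + 1)) (X ^ ((p + 1) * p ^ r) : R[X]) = X ^ p ^ r := by
  have h := hasseDeriv_prime_pow_mul_X_pow_prime_pow_mul (R := R) p r (p + 1) p
  rw [Nat.choose_succ_self_right, Nat.add_sub_cancel_left, mul_one, ← pow_succ] at h
  rw [mul_comm, h]
  simp

end Polynomial

/-- Lemma 4.1(a) of the paper (for `τ_k = −σ_k`): with
`τ_k = Σ_{r=0}^{k} X^{(p+1)p^r}` in `K[X]`, `K` a field of prime characteristic `p`,
one has `∂_{p^0}(τ_0) = X^p` and `∂_{p^k}(τ_k) = X^{p^{k+1}} + X^{p^{k−1}}` for `k ≥ 1`. -/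
theorem hasseDeriv_tau (K : Type*) [Field K] (p : ℕ) [Fact p.Prime] [CharP K p] :
    Polynomial.hasseDeriv (p ^ 0)
        (∑ r ∈ Finset.range (0 + 1), (X : K[X]) ^ ((p + 1) * p ^ r)) = X ^ p ∧
    ∀ k : ℕ, 1 ≤ k →
      Polynomial.hasseDeriv (p ^ k)
          (∑ r ∈ Finset.range (k + 1), (X : K[X]) ^ ((p + 1) * p ^ r)) =
        X ^ (p ^ (k + 1)) + X ^ (p ^ (k - 1)) := by
  have hp : p.Prime := Fact.out
  refine ⟨?_, fun k hk => ?_⟩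
  · rw [Finset.sum_range_one, hasseDeriv_prime_pow_X_pow_succ_mul_prime_pow, pow_one]
  obtain ⟨j, rfl⟩ : ∃ j, k = j + 1 := ⟨k - 1, by omega⟩
  have low_terms_vanish : ∀ r ∈ Finset.range j,
      hasseDeriv (p ^ (j + 1)) ((X : K[X]) ^ ((p + 1) * p ^ r)) = 0 := by
    intro r hr
    refine hasseDeriv_X_pow_eq_zero_of_lt ?_
    calc (p + 1) * p ^ r < p ^ 2 * p ^ r :=
          (Nat.mul_lt_mul_right (pow_pos hp.pos r)).mpr (by nlinarith [hp.two_le])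
      _ = p ^ (r + 2) := by ring
      _ ≤ p ^ (j + 1) := Nat.pow_le_pow_right hp.pos (by have := Finset.mem_range.mp hr; omega)
  rw [Finset.sum_range_succ, Finset.sum_range_succ, map_add, map_add, map_sum,
    Finset.sum_eq_zero low_terms_vanish, zero_add,
    hasseDeriv_prime_pow_succ_X_pow_succ_mul_prime_pow,
    hasseDeriv_prime_pow_X_pow_succ_mul_prime_pow, Nat.add_sub_cancel, add_comm]
end

section
/- Let K be a field of prime characteristic p and for k ≥ 0 set τ_k = Σ_{r=0}^{k} X^{p^r + p^{2r}} ∈ K[X]. Then for every k ≥ 1 the polynomial ∂_{p^k}(τ_k) is nonzero of degree exactly p^{2k}. -/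
/-!
In characteristic `p` we have `(X + 1)^(p^a + p^b) = (X^(p^a) + 1)(X^(p^b) + 1)`, so for `a ≠ b`
the binomial coefficient `(p^a + p^b).choose (p^a)` is `1` in `K`. Hence `∂_{p^k}` sends the top
term `X^(p^k + p^(2k))` of `τ_k` to `X^(p^(2k))`, while every other term of `τ_k` has degree at
most `p^(k-1) + p^(2k-2) < p^(2k)`, and `∂_{p^k}` does not raise degrees.
-/

open Polynomial

theorem cast_choose_pow_add_pow {R : Type*} [CommRing R] (p : ℕ) [Fact p.Prime] [CharP R p]
    {a b : ℕ} (hab : a ≠ b) : ((p ^ a + p ^ b).choose (p ^ a) : R) = 1 := by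
  have hp : 2 ≤ p := (Fact.out : p.Prime).two_le
  have hpab : p ^ a ≠ p ^ b := fun h => hab (Nat.pow_right_injective hp h)
  rw [← coeff_X_add_one_pow R, pow_add, add_pow_char_pow, add_pow_char_pow, one_pow, one_pow]
  simp [add_mul, mul_add, ← pow_add, coeff_X_pow, coeff_one, hpab, show p ≠ 0 by omega]

theorem hasseDeriv_X_pow_add_pow {R : Type*} [CommRing R] (p : ℕ) [Fact p.Prime] [CharP R p]
    {a b : ℕ} (hab : a ≠ b) :
    hasseDeriv (p ^ a) ((X : R[X]) ^ (p ^ a + p ^ b)) = X ^ p ^ b := by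
  rw [X_pow_eq_monomial, hasseDeriv_monomial, cast_choose_pow_add_pow p hab,
    Nat.add_sub_cancel_left, mul_one, ← X_pow_eq_monomial]

theorem pow_add_pow_two_mul_lt {p : ℕ} (hp : 2 ≤ p) (m : ℕ) :
    p ^ m + p ^ (2 * m) < p ^ (2 * (m + 1)) :=
  calc p ^ m + p ^ (2 * m) ≤ 2 * p ^ (2 * m) := by
        have := Nat.pow_le_pow_right (by omega : 0 < p) (by omega : m ≤ 2 * m)
        omega
    _ ≤ p * p ^ (2 * m) := Nat.mul_le_mul_right _ hp
    _ = p ^ (2 * m + 1) := (pow_succ' p _).symm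
    _ < p ^ (2 * (m + 1)) := Nat.pow_lt_pow_right hp (by omega)

noncomputable def tau (R : Type*) [Semiring R] (p k : ℕ) : R[X] :=
  ∑ r ∈ Finset.range (k + 1), X ^ (p ^ r + p ^ (2 * r))

section Tau

variable {R : Type*} [Semiring R] {p : ℕ}

theorem tau_succ (k : ℕ) :
    tau R p (k + 1) = tau R p k + X ^ (p ^ (k + 1) + p ^ (2 * (k + 1))) :=
  Finset.sum_range_succ _ _

theorem natDegree_tau_le (hp : 0 < p) (k : ℕ) :
    (tau R p k).natDegree ≤ p ^ k + p ^ (2 * k) := by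
  refine natDegree_sum_le_of_forall_le _ _ fun r hr => (natDegree_X_pow_le _).trans ?_
  have hrk : r ≤ k := Nat.lt_succ_iff.mp (Finset.mem_range.mp hr)
  exact add_le_add (Nat.pow_le_pow_right hp hrk) (Nat.pow_le_pow_right hp (by omega))

end Tau

/-- With `τ_k = Σ_{r=0}^{k} X^{p^r + p^{2r}}` in `K[X]`, `K` a field of prime
characteristic `p`, for every `k ≥ 1` the polynomial `∂_{p^k}(τ_k)` is nonzero of
degree exactly `p^{2k}`. -/
theorem hasseDeriv_tau_degree (K : Type*) [Field K] (p : ℕ) [Fact p.Prime] [CharP K p]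
    (k : ℕ) (hk : 1 ≤ k) :
    Polynomial.hasseDeriv (p ^ k)
        (∑ r ∈ Finset.range (k + 1), (X : K[X]) ^ (p ^ r + p ^ (2 * r))) ≠ 0 ∧
    (Polynomial.hasseDeriv (p ^ k)
        (∑ r ∈ Finset.range (k + 1), (X : K[X]) ^ (p ^ r + p ^ (2 * r)))).natDegree =
      p ^ (2 * k) := by
  change hasseDeriv (p ^ k) (tau K p k) ≠ 0 ∧ (hasseDeriv (p ^ k) (tau K p k)).natDegree = _
  obtain ⟨m, rfl⟩ : ∃ m, k = m + 1 := ⟨k - 1, by omega⟩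
  have hp : 2 ≤ p := (Fact.out : p.Prime).two_le
  have hlow : (hasseDeriv (p ^ (m + 1)) (tau K p m)).natDegree < p ^ (2 * (m + 1)) :=
    calc _ ≤ (tau K p m).natDegree - p ^ (m + 1) := natDegree_hasseDeriv_le _ _
      _ ≤ (tau K p m).natDegree := Nat.sub_le _ _
      _ ≤ p ^ m + p ^ (2 * m) := natDegree_tau_le (by omega) m
      _ < p ^ (2 * (m + 1)) := pow_add_pow_two_mul_lt hp m
  have hdeg : (hasseDeriv (p ^ (m + 1)) (tau K p (m + 1))).natDegree = p ^ (2 * (m + 1)) := by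
    rw [tau_succ, map_add, hasseDeriv_X_pow_add_pow p (by omega), add_comm,
      natDegree_add_eq_left_of_natDegree_lt, natDegree_X_pow]
    rwa [natDegree_X_pow]
  refine ⟨fun h => ?_, hdeg⟩
  rw [h, natDegree_zero] at hdeg
  exact (pow_pos (by omega) _).ne' hdeg.symm
end

section
/- Let K be a field of prime characteristic p and let e ≥ 1 and i be integers with p^e ≤ i and i ≥ 2p + 1. Then in K[X] the K-linear span of the set {X^{j+p} : 0 ≤ j ≤ i−1} ∪ {X^j·(X^{p^{k+1}} + X^{p^{k−1}}) : 1 ≤ k ≤ e−1, 0 ≤ j, j + p^k ≤ i} ∪ {X^j : 0 ≤ j ≤ i−1−p} equals the K-linear span of {X^j : 0 ≤ j ≤ i − p^{e−1} + p^e}, i.e. the space of all polynomials of degree at most i − p^{e−1} + p^e. -/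
open Polynomial

private lemma pow_step_le (p : ℕ) (hp : 1 ≤ p) {a b : ℕ} (hab : a ≤ b) :
    p ^ (a + 1) + p ^ b ≤ p ^ (b + 1) + p ^ a := by
  obtain ⟨c, hc⟩ := Nat.le.dest (Nat.pow_le_pow_right hp hab)
  have h3 : c ≤ c * p := Nat.le_mul_of_pos_right c (by omega)
  rw [pow_succ, pow_succ, ← hc, add_mul]
  linarith

/-- Step in the proof of Theorem 4.2 of the paper:
`V_{2,e−1} + ⋯ + V_{2,0} + V_3 = K⟨x^j : 0 ≤ j ≤ i − p^{e−1} + p^e⟩` for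
`e ≥ 1`, `p^e ≤ i` and `i ≥ 2p + 1`, where `K` is a field of prime characteristic `p`. -/
theorem span_V2_V3 (K : Type*) [Field K] (p : ℕ) [Fact p.Prime] [CharP K p]
    (e i : ℕ) (he : 1 ≤ e) (hpe : p ^ e ≤ i) (hi : 2 * p + 1 ≤ i) :
    Submodule.span K
        ({f : K[X] | ∃ j : ℕ, j ≤ i - 1 ∧ f = X ^ (j + p)} ∪
          {f : K[X] | ∃ j k : ℕ, 1 ≤ k ∧ k ≤ e - 1 ∧ j + p ^ k ≤ i ∧
            f = X ^ j * (X ^ (p ^ (k + 1)) + X ^ (p ^ (k - 1)))} ∪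
          {f : K[X] | ∃ j : ℕ, j ≤ i - 1 - p ∧ f = X ^ j}) =
      Submodule.span K {f : K[X] | ∃ j : ℕ, j ≤ i - p ^ (e - 1) + p ^ e ∧ f = X ^ j} := by
  have hp2 : 2 ≤ p := (Fact.out : p.Prime).two_le
  have hee : p ^ (e - 1) ≤ p ^ e := Nat.pow_le_pow_right (by omega) (by omega)
  have he1pos : 1 ≤ p ^ (e - 1) := Nat.one_le_pow _ _ (by omega)
  have hei : p ^ (e - 1) ≤ i := le_trans hee hpe
  have hkey : p ^ 1 + p ^ (e - 1) ≤ p ^ (e - 1 + 1) + p ^ 0 :=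
    pow_step_le p (by omega) (Nat.zero_le _)
  rw [pow_one, pow_zero, show e - 1 + 1 = e by omega] at hkey
  apply le_antisymm
  · rw [Submodule.span_le]
    rintro f ((⟨j, hj, rfl⟩ | ⟨j, k, hk1, hke, hjk, rfl⟩) | ⟨j, hj, rfl⟩)
    · exact Submodule.subset_span ⟨j + p, by omega, rfl⟩
    · have hkk : p ^ k ≤ p ^ (e - 1) := Nat.pow_le_pow_right (by omega) hke
      have hkk1 : p ^ (k - 1) ≤ p ^ k := Nat.pow_le_pow_right (by omega) (by omega)
      have hkey2 : p ^ (k + 1) + p ^ (e - 1) ≤ p ^ (e - 1 + 1) + p ^ k :=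
        pow_step_le p (by omega) hke
      rw [show e - 1 + 1 = e by omega] at hkey2
      have h1 : X ^ j * (X ^ (p ^ (k + 1)) + X ^ (p ^ (k - 1)))
          = (X : K[X]) ^ (j + p ^ (k + 1)) + X ^ (j + p ^ (k - 1)) := by
        rw [mul_add, ← pow_add, ← pow_add]
      rw [SetLike.mem_coe, h1]
      exact Submodule.add_mem _ (Submodule.subset_span ⟨_, by omega, rfl⟩)
        (Submodule.subset_span ⟨_, by omega, rfl⟩)
    · exact Submodule.subset_span ⟨j, by omega, rfl⟩
  · rw [Submodule.span_le]
    rintro f ⟨m, hm, rfl⟩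
    have small : ∀ m' : ℕ, m' ≤ i - 1 + p →
        (X : K[X]) ^ m' ∈ Submodule.span K
          ({f : K[X] | ∃ j : ℕ, j ≤ i - 1 ∧ f = X ^ (j + p)} ∪
            {f : K[X] | ∃ j k : ℕ, 1 ≤ k ∧ k ≤ e - 1 ∧ j + p ^ k ≤ i ∧
              f = X ^ j * (X ^ (p ^ (k + 1)) + X ^ (p ^ (k - 1)))} ∪
            {f : K[X] | ∃ j : ℕ, j ≤ i - 1 - p ∧ f = X ^ j}) := by
      intro m' hm'
      by_cases h : p ≤ m'
      · exact Submodule.subset_span (Or.inl (Or.inl ⟨m' - p, by omega, by congr 1; omega⟩))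
      · exact Submodule.subset_span (Or.inr ⟨m', by omega, rfl⟩)
    by_cases hcase : m ≤ i - 1 + p
    · exact small m hcase
    · push_neg at hcase
      have he2 : 2 ≤ e := by
        by_contra h
        have he1 : e = 1 := by omega
        rw [he1, pow_one, show (1:ℕ) - 1 = 0 by omega, pow_zero] at hm
        omega
      have h22 : p ^ (e - 2) ≤ p ^ (e - 1) := Nat.pow_le_pow_right (by omega) (by omega)
      have h2pos : 1 ≤ p ^ (e - 2) := Nat.one_le_pow _ _ (by omega)
      have hgap : p ^ (e - 2) + 1 ≤ p ^ (e - 1) := by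
        have h2e : p ^ (e - 1) = p ^ (e - 2) * p := by
          rw [← pow_succ]; congr 1; omega
        have hmul : p ^ (e - 2) * 2 ≤ p ^ (e - 2) * p := Nat.mul_le_mul_left _ hp2
        rw [h2e]; linarith
      have hmB0 : p ^ e ≤ m := by omega
      have hj1 : (m - p ^ e) + p ^ (e - 1) ≤ i := by omega
      have hj2 : (m - p ^ e) + p ^ (e - 2) ≤ i - 1 + p := by omega
      have hg : (X : K[X]) ^ (m - p ^ e) *
            (X ^ (p ^ (e - 1 + 1)) + X ^ (p ^ (e - 1 - 1))) ∈ Submodule.span K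
          ({f : K[X] | ∃ j : ℕ, j ≤ i - 1 ∧ f = X ^ (j + p)} ∪
            {f : K[X] | ∃ j k : ℕ, 1 ≤ k ∧ k ≤ e - 1 ∧ j + p ^ k ≤ i ∧
              f = X ^ j * (X ^ (p ^ (k + 1)) + X ^ (p ^ (k - 1)))} ∪
            {f : K[X] | ∃ j : ℕ, j ≤ i - 1 - p ∧ f = X ^ j}) :=
        Submodule.subset_span (Or.inl (Or.inr ⟨m - p ^ e, e - 1, by omega, le_refl _, hj1, rfl⟩))
      have expand : (X : K[X]) ^ (m - p ^ e) *
            (X ^ (p ^ (e - 1 + 1)) + X ^ (p ^ (e - 1 - 1)))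
          = X ^ m + X ^ ((m - p ^ e) + p ^ (e - 2)) := by
        rw [show e - 1 + 1 = e by omega, show e - 1 - 1 = e - 2 by omega,
          mul_add, ← pow_add, ← pow_add, Nat.sub_add_cancel hmB0]
      have hXm : (X : K[X]) ^ m
          = (X : K[X]) ^ (m - p ^ e) * (X ^ (p ^ (e - 1 + 1)) + X ^ (p ^ (e - 1 - 1)))
            - X ^ ((m - p ^ e) + p ^ (e - 2)) := by
        rw [expand]; ring
      rw [SetLike.mem_coe, hXm]
      exact Submodule.sub_mem _ hg (small _ hj2)
end

section
/- Let K be a field of prime characteristic p, let i ≥ 2p + 1 be an integer, and let e ≥ 1 be the integer with p^e ≤ i < p^{e+1}. Assume p^{e+1} − p^e + p^{e−1} ≤ i. Let W_i ⊆ K[X] be the K-linear span of {X^{j+p} : 0 ≤ j ≤ i−1} ∪ {X^j·(X^{p^{k+1}} + X^{p^{k−1}}) : k ≥ 1, 0 ≤ j, j + p^k ≤ i} ∪ {X^j : 0 ≤ j ≤ i−1−p}. Then dim_K W_i = i − p^e + p^{e+1} + 1; indeed W_i is exactly the space of all polynomials of degree at most i − p^e + p^{e+1}. (Together with the (i+1)-dimensional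 space V_1 = K⟨x^j s_2 : 0 ≤ j ≤ i⟩ this gives Case 1 of Theorem 4.2: dim_K F_i s_2 = 2i + p^{e+1} − p^e + 2.) -/
open Polynomial

lemma span_monomials_eq_degreeLT (K : Type*) [Field K] (N : ℕ) :
    Submodule.span K {f : K[X] | ∃ j : ℕ, j ≤ N ∧ f = X ^ j} = degreeLT K (N + 1) := by
  classical
  rw [degreeLT_eq_span_X_pow]
  congr 1
  ext f
  simp only [Set.mem_setOf_eq, Finset.coe_image, Set.mem_image, Finset.mem_coe,
    Finset.mem_range, Nat.lt_succ_iff]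
  constructor
  · rintro ⟨j, hj, rfl⟩; exact ⟨j, hj, rfl⟩
  · rintro ⟨j, hj, rfl⟩; exact ⟨j, hj, rfl⟩

lemma finrank_degreeLT (K : Type*) [Field K] (n : ℕ) :
    Module.finrank K (degreeLT K n) = n := by
  rw [(degreeLTEquiv K n).finrank_eq, Module.finrank_fin_fun]

/-- Case 1 of the proof of Theorem 4.2 of the paper: for `i ≥ 2p + 1` with
`p^e ≤ i < p^{e+1}` (`e ≥ 1`) and `p^{e+1} − p^e + p^{e−1} ≤ i`, the space
`W_i = V_2 + V_3` is exactly the space of polynomials of degree at most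
`i − p^e + p^{e+1}`, and has dimension `i − p^e + p^{e+1} + 1`. -/
theorem dim_W_case1 (K : Type*) [Field K] (p : ℕ) [Fact p.Prime] [CharP K p]
    (e i : ℕ) (he : 1 ≤ e) (h1 : p ^ e ≤ i) (h2 : i < p ^ (e + 1))
    (hi : 2 * p + 1 ≤ i) (hc : p ^ (e + 1) - p ^ e + p ^ (e - 1) ≤ i) :
    Submodule.span K
        ({f : K[X] | ∃ j : ℕ, j ≤ i - 1 ∧ f = X ^ (j + p)} ∪
          {f : K[X] | ∃ j k : ℕ, 1 ≤ k ∧ j + p ^ k ≤ i ∧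
            f = X ^ j * (X ^ (p ^ (k + 1)) + X ^ (p ^ (k - 1)))} ∪
          {f : K[X] | ∃ j : ℕ, j ≤ i - 1 - p ∧ f = X ^ j}) =
      Submodule.span K {f : K[X] | ∃ j : ℕ, j ≤ i - p ^ e + p ^ (e + 1) ∧ f = X ^ j} ∧
    Module.finrank K
        (Submodule.span K
          ({f : K[X] | ∃ j : ℕ, j ≤ i - 1 ∧ f = X ^ (j + p)} ∪
            {f : K[X] | ∃ j k : ℕ, 1 ≤ k ∧ j + p ^ k ≤ i ∧
              f = X ^ j * (X ^ (p ^ (k + 1)) + X ^ (p ^ (k - 1)))} ∪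
            {f : K[X] | ∃ j : ℕ, j ≤ i - 1 - p ∧ f = X ^ j})) =
      i - p ^ e + p ^ (e + 1) + 1 := by
  have hp2 : 2 ≤ p := (Fact.out : p.Prime).two_le
  have hp0 : 0 < p := by omega
  have hpe : p ≤ p ^ e := Nat.le_self_pow (by omega) p
  -- basic power facts
  have hsucc : p ^ (e + 1) = p ^ e * p := pow_succ p e
  have h2b : 2 * p ^ e ≤ p ^ (e + 1) := by
    rw [hsucc]; calc 2 * p ^ e = p ^ e * 2 := by ring
    _ ≤ p ^ e * p := Nat.mul_le_mul_left _ hp2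
  have hab : p ^ (e - 1) < p ^ e := Nat.pow_lt_pow_right (by omega) (by omega)
  have hbc : p ^ e < p ^ (e + 1) := Nat.pow_lt_pow_right (by omega) (by omega)
  set N := i - p ^ e + p ^ (e + 1) with hN
  set W := Submodule.span K
        ({f : K[X] | ∃ j : ℕ, j ≤ i - 1 ∧ f = X ^ (j + p)} ∪
          {f : K[X] | ∃ j k : ℕ, 1 ≤ k ∧ j + p ^ k ≤ i ∧
            f = X ^ j * (X ^ (p ^ (k + 1)) + X ^ (p ^ (k - 1)))} ∪
          {f : K[X] | ∃ j : ℕ, j ≤ i - 1 - p ∧ f = X ^ j}) with hW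
  have key : ∀ m, m ≤ N → (X : K[X]) ^ m ∈ W := by
    intro m
    induction m using Nat.strong_induction_on with
    | _ m IH =>
      intro hm
      by_cases hA : m ≤ i - 1 + p
      · by_cases hmp : p ≤ m
        · apply Submodule.subset_span
          exact Or.inl (Or.inl ⟨m - p, by omega, by congr 1; omega⟩)
        · apply Submodule.subset_span
          exact Or.inr ⟨m, by omega, rfl⟩
      · push_neg at hA
        by_cases hB : p ^ (e + 1) ≤ m
        · -- use k = e
          have hg : (X : K[X]) ^ (m - p ^ (e + 1)) * (X ^ (p ^ (e + 1)) + X ^ (p ^ (e - 1)))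
              ∈ W :=
            Submodule.subset_span (Or.inl (Or.inr ⟨m - p ^ (e + 1), e, he, by omega, rfl⟩))
          have hid : (X : K[X]) ^ (m - p ^ (e + 1)) * (X ^ (p ^ (e + 1)) + X ^ (p ^ (e - 1)))
              = X ^ m + X ^ (m - p ^ (e + 1) + p ^ (e - 1)) := by
            rw [mul_add, ← pow_add, ← pow_add]
            congr 2
            omega
          have hr : (X : K[X]) ^ (m - p ^ (e + 1) + p ^ (e - 1)) ∈ W :=
            IH _ (by omega) (by omega)
          have : (X : K[X]) ^ m =
              (X : K[X]) ^ (m - p ^ (e + 1)) * (X ^ (p ^ (e + 1)) + X ^ (p ^ (e - 1)))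
                - X ^ (m - p ^ (e + 1) + p ^ (e - 1)) := by
            rw [hid]; ring
          rw [this]
          exact Submodule.sub_mem _ hg hr
        · -- i + p ≤ m < p^(e+1): use k = e - 1, need e ≥ 2
          push_neg at hB
          have he2 : 2 ≤ e := by
            by_contra h
            have : e = 1 := by omega
            subst this
            simp only [pow_zero, pow_one] at hc hB hpe
            omega
          have hcd : p ^ (e - 2) < p ^ (e - 1) := Nat.pow_lt_pow_right (by omega) (by omega)
          have hk1 : e - 1 + 1 = e := by omega
          have hk2 : e - 1 - 1 = e - 2 := by omega
          have hg : (X : K[X]) ^ (m - p ^ e) * (X ^ (p ^ e) + X ^ (p ^ (e - 2))) ∈ W := by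
            apply Submodule.subset_span
            refine Or.inl (Or.inr ⟨m - p ^ e, e - 1, by omega, by omega, ?_⟩)
            rw [hk1, hk2]
          have hid : (X : K[X]) ^ (m - p ^ e) * (X ^ (p ^ e) + X ^ (p ^ (e - 2)))
              = X ^ m + X ^ (m - p ^ e + p ^ (e - 2)) := by
            rw [mul_add, ← pow_add, ← pow_add]
            congr 2
            omega
          have hr : (X : K[X]) ^ (m - p ^ e + p ^ (e - 2)) ∈ W :=
            IH _ (by omega) (by omega)
          have : (X : K[X]) ^ m =
              (X : K[X]) ^ (m - p ^ e) * (X ^ (p ^ e) + X ^ (p ^ (e - 2)))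
                - X ^ (m - p ^ e + p ^ (e - 2)) := by
            rw [hid]; ring
          rw [this]
          exact Submodule.sub_mem _ hg hr
  have hspan : W = Submodule.span K {f : K[X] | ∃ j : ℕ, j ≤ N ∧ f = X ^ j} := by
    apply le_antisymm
    · rw [hW]
      apply Submodule.span_le.mpr
      rintro f ((⟨j, hj, rfl⟩ | ⟨j, k, hk, hjk, rfl⟩) | ⟨j, hj, rfl⟩)
      · exact Submodule.subset_span ⟨j + p, by omega, rfl⟩
      · -- k ≤ e since p^k ≤ i < p^(e+1)
        have hpk : p ^ k ≤ i := by omega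
        have hke : k ≤ e := by
          by_contra h
          have : p ^ (e + 1) ≤ p ^ k := Nat.pow_le_pow_right (by omega) (by omega)
          omega
        have hk1e : p ^ (k - 1) ≤ p ^ k := Nat.pow_le_pow_right (by omega) (by omega)
        have hkk : p ^ k ≤ p ^ e := Nat.pow_le_pow_right (by omega) hke
        -- p^(k+1) + p^e ≤ p^(e+1) + p^k
        have hswap : p ^ (k + 1) + p ^ e ≤ p ^ (e + 1) + p ^ k := by
          have hexp : ∀ a : ℕ, p ^ (a + 1) = p ^ a * (p - 1) + p ^ a := by
            intro a
            have hm : p ^ a * (p - 1) = p ^ a * p - p ^ a := by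
              rw [Nat.mul_sub, mul_one]
            have hle : p ^ a ≤ p ^ a * p := Nat.le_mul_of_pos_right _ hp0
            rw [pow_succ]
            omega
          have h1' := hexp k
          have h2' := hexp e
          have h3' : p ^ k * (p - 1) ≤ p ^ e * (p - 1) := Nat.mul_le_mul_right _ hkk
          omega
        have hsum : (X : K[X]) ^ j * (X ^ (p ^ (k + 1)) + X ^ (p ^ (k - 1)))
            = X ^ (j + p ^ (k + 1)) + X ^ (j + p ^ (k - 1)) := by
          rw [mul_add, ← pow_add, ← pow_add]
        rw [hsum]
        exact Submodule.add_mem _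
          (Submodule.subset_span ⟨j + p ^ (k + 1), by omega, rfl⟩)
          (Submodule.subset_span ⟨j + p ^ (k - 1), by omega, rfl⟩)
      · exact Submodule.subset_span ⟨j, by omega, rfl⟩
    · apply Submodule.span_le.mpr
      rintro f ⟨j, hj, rfl⟩
      exact key j hj
  constructor
  · exact hspan
  · rw [hspan, span_monomials_eq_degreeLT, finrank_degreeLT]
end

section
/- Let K be a field of prime characteristic p, let i ≥ 2p + 1 be an integer, and let e ≥ 1 be the integer with p^e ≤ i < p^{e+1}. Assume i < p^{e+1} − p^e + p^{e−1}. Let W_i ⊆ K[X] be the K-linear span of {X^{j+p} : 0 ≤ j ≤ i−1} ∪ {X^j·(X^{p^{k+1}} + X^{p^{k−1}}) : k ≥ 1, 0 ≤ j, j + p^k ≤ i} ∪ {X^j : 0 ≤ j ≤ i−1−p}. Then dim_K W_i = (i − p^{e−1} + p^e + 1) + (i − p^e + 1) = 2i − p^{e−1} + 2. (Together with the (i+1)-dimensional space V_1 = K⟨x^j s_2 : 0 ≤ j ≤ i⟩ this gives Case 2 of Theorem 4.2: dim_K F_i s_2 = 3i − p^{e−1} + 3.) -/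
/-!
Each generator `X^j (X^{p^{k+1}} + X^{p^{k-1}})` differs from the monomial `X^{j+p^{k+1}}` by a
monomial of degree `< i`, and the first and third families already contain every monomial of
degree `≤ i - 1 + p`. So `W_i` is spanned by the monomials `X^m` with `m ≤ i - 1 + p` or
`m = j + p^{k+1}`, `j + p^k ≤ i`. Since `p^k ≤ i < p^{e+1}` forces `k ≤ e`, and the gap
`p^{k+1} - p^k` grows with `k`, these exponents form the two intervals `[0, i - p^{e-1} + p^e]`
and `[p^{e+1}, i - p^e + p^{e+1}]`, which are disjoint exactly when
`i < p^{e+1} - p^e + p^{e-1}`.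
-/

open Polynomial

noncomputable def wSubmodule (R : Type*) [Ring R] (p i : ℕ) : Submodule R R[X] :=
  Submodule.span R
    ({f : R[X] | ∃ j : ℕ, j ≤ i - 1 ∧ f = X ^ (j + p)} ∪
      {f : R[X] | ∃ j k : ℕ, 1 ≤ k ∧ j + p ^ k ≤ i ∧
        f = X ^ j * (X ^ (p ^ (k + 1)) + X ^ (p ^ (k - 1)))} ∪
      {f : R[X] | ∃ j : ℕ, j ≤ i - 1 - p ∧ f = X ^ j})

def wExponents (p i : ℕ) : Set ℕ :=
  {m | m ≤ i - 1 + p} ∪ {m | ∃ j k : ℕ, 1 ≤ k ∧ j + p ^ k ≤ i ∧ m = j + p ^ (k + 1)}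

theorem mem_wExponents {p i m : ℕ} : m ∈ wExponents p i ↔
    m ≤ i - 1 + p ∨ ∃ j k : ℕ, 1 ≤ k ∧ j + p ^ k ≤ i ∧ m = j + p ^ (k + 1) :=
  Iff.rfl

section Span

variable {R : Type*} [Ring R] {p i : ℕ}

theorem X_pow_mem_wSubmodule (hp : 1 ≤ p) (hi : 2 * p ≤ i) {m : ℕ} (hm : m ≤ i - 1 + p) :
    (X : R[X]) ^ m ∈ wSubmodule R p i := by
  by_cases hmp : m < p
  · exact Submodule.subset_span (Or.inr ⟨m, by omega, rfl⟩)
  · refine Submodule.subset_span (Or.inl (Or.inl ⟨m - p, by omega, ?_⟩))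
    rw [Nat.sub_add_cancel (by omega)]

theorem wSubmodule_eq_span_X_pow (hp : 1 ≤ p) (hi : 2 * p ≤ i) :
    wSubmodule R p i = Submodule.span R ((fun m => (X : R[X]) ^ m) '' wExponents p i) := by
  have binomial_eq (j k : ℕ) : (X : R[X]) ^ j * (X ^ (p ^ (k + 1)) + X ^ (p ^ (k - 1))) =
      X ^ (j + p ^ (k + 1)) + X ^ (j + p ^ (k - 1)) := by
    rw [mul_add, ← pow_add, ← pow_add]
  have hpow (k : ℕ) : p ^ (k - 1) ≤ p ^ k := Nat.pow_le_pow_right hp (Nat.sub_le k 1)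
  apply le_antisymm
  · refine Submodule.span_le.2 ?_
    rintro f ((⟨j, hj, rfl⟩ | ⟨j, k, hk, hjk, rfl⟩) | ⟨j, hj, rfl⟩)
    · exact Submodule.subset_span ⟨j + p, mem_wExponents.2 (Or.inl (by omega)), rfl⟩
    · rw [binomial_eq]
      refine add_mem (Submodule.subset_span ⟨_, Or.inr ⟨j, k, hk, hjk, rfl⟩, rfl⟩)
        (Submodule.subset_span ⟨_, mem_wExponents.2 (Or.inl ?_), rfl⟩)
      have := hpow k
      omega
    · exact Submodule.subset_span ⟨j, mem_wExponents.2 (Or.inl (by omega)), rfl⟩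
  · refine Submodule.span_le.2 ?_
    rintro _ ⟨m, hm | ⟨j, k, hk, hjk, rfl⟩, rfl⟩
    · exact X_pow_mem_wSubmodule hp hi hm
    · have hbin : (X : R[X]) ^ j * (X ^ (p ^ (k + 1)) + X ^ (p ^ (k - 1))) ∈ wSubmodule R p i :=
        Submodule.subset_span (Or.inl (Or.inr ⟨j, k, hk, hjk, rfl⟩))
      have hlow : (X : R[X]) ^ (j + p ^ (k - 1)) ∈ wSubmodule R p i :=
        X_pow_mem_wSubmodule hp hi (by have := hpow k; omega)
      have hdiff : (X : R[X]) ^ (j + p ^ (k + 1)) =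
          X ^ j * (X ^ (p ^ (k + 1)) + X ^ (p ^ (k - 1))) - X ^ (j + p ^ (k - 1)) := by
        rw [binomial_eq, add_sub_cancel_right]
      simp only [SetLike.mem_coe, hdiff]
      exact sub_mem hbin hlow

end Span

theorem finrank_span_X_pow_image (K : Type*) [Field K] (s : Finset ℕ) :
    Module.finrank K (Submodule.span K ((fun m => (X : K[X]) ^ m) '' s)) = s.card := by
  have hli : LinearIndependent K (fun m : (s : Set ℕ) => (X : K[X]) ^ (m : ℕ)) := by
    simpa [coe_basisMonomials, monomial_one_right_eq_X_pow, Function.comp_def] using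
      (basisMonomials K).linearIndependent.comp _ Subtype.val_injective
  rw [Set.image_eq_range, finrank_span_eq_card hli]
  simp only [SetLike.coe_sort_coe, Fintype.card_coe]

theorem pow_succ_sub_pow_le_pow_succ_sub_pow {p m n : ℕ} (hp : 1 ≤ p) (h : m ≤ n) :
    p ^ (m + 1) - p ^ m ≤ p ^ (n + 1) - p ^ n := by
  simp only [pow_succ, ← Nat.mul_sub_one]
  exact Nat.mul_le_mul_right _ (Nat.pow_le_pow_right hp h)

theorem wExponents_eq {p e i : ℕ} (hp : 2 ≤ p) (he : 1 ≤ e) (h1 : p ^ e ≤ i)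
    (h2 : i < p ^ (e + 1)) :
    wExponents p i = ↑(Finset.range (i - p ^ (e - 1) + p ^ e + 1) ∪
      Finset.Icc (p ^ (e + 1)) (i - p ^ e + p ^ (e + 1))) := by
  have hgap (k : ℕ) (hk : k ≤ e - 1) : p ^ (k + 1) - p ^ k ≤ p ^ e - p ^ (e - 1) := by
    simpa only [Nat.sub_add_cancel he] using pow_succ_sub_pow_le_pow_succ_sub_pow (by omega) hk
  have hmono (k : ℕ) : p ^ k ≤ p ^ (k + 1) := Nat.pow_le_pow_right (by omega) (by omega)
  have hpe : p ^ (e - 1) ≤ p ^ e := Nat.pow_le_pow_right (by omega) (by omega)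
  have hgap0 := hgap 0 (Nat.zero_le _)
  simp only [pow_zero, zero_add, pow_one] at hgap0
  ext m
  simp only [mem_wExponents, Finset.coe_union, Finset.coe_range, Finset.coe_Icc, Set.mem_union,
    Set.mem_Iio, Set.mem_Icc]
  constructor
  · rintro (hm | ⟨j, k, hk, hjk, rfl⟩)
    · exact Or.inl (by omega)
    · have hke : k ≤ e := by
        by_contra! hke
        have := Nat.pow_le_pow_right (show 0 < p by omega) (show e + 1 ≤ k by omega)
        omega
      rcases hke.lt_or_eq with hke | rfl
      · have := hgap k (by omega)
        have := hmono k
        exact Or.inl (by omega)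
      · exact Or.inr (by omega)
  · rintro (hm | hm)
    · by_cases hlow : m ≤ i - 1 + p
      · exact Or.inl hlow
      · have he2 : 2 ≤ e := by
          by_contra! he2
          obtain rfl : e = 1 := by omega
          simp only [Nat.sub_self, pow_zero, pow_one] at hm
          omega
        refine Or.inr ⟨m - p ^ e, e - 1, by omega, by omega, ?_⟩
        rw [Nat.sub_add_cancel he]
        omega
    · exact Or.inr ⟨m - p ^ (e + 1), e, he, by omega, by omega⟩

theorem card_range_union_Icc {a b c : ℕ} (h : a < c) :
    (Finset.range (a + 1) ∪ Finset.Icc c b).card = a + 1 + (b + 1 - c) := by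
  rw [Finset.card_union_of_disjoint, Finset.card_range, Nat.card_Icc]
  refine Finset.disjoint_left.2 fun m hm hm' => ?_
  simp only [Finset.mem_range, Finset.mem_Icc] at hm hm'
  omega

theorem dim_W_case2_general (K : Type*) [Field K] (p : ℕ) [Fact p.Prime]
    (e i : ℕ) (he : 1 ≤ e) (h1 : p ^ e ≤ i) (h2 : i < p ^ (e + 1))
    (hi : 2 * p + 1 ≤ i) (hc : i < p ^ (e + 1) - p ^ e + p ^ (e - 1)) :
    Module.finrank K
        (Submodule.span K
          ({f : K[X] | ∃ j : ℕ, j ≤ i - 1 ∧ f = X ^ (j + p)} ∪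
            {f : K[X] | ∃ j k : ℕ, 1 ≤ k ∧ j + p ^ k ≤ i ∧
              f = X ^ j * (X ^ (p ^ (k + 1)) + X ^ (p ^ (k - 1)))} ∪
            {f : K[X] | ∃ j : ℕ, j ≤ i - 1 - p ∧ f = X ^ j})) =
      (i - p ^ (e - 1) + p ^ e + 1) + (i - p ^ e + 1) := by
  have hp : 2 ≤ p := (Fact.out : p.Prime).two_le
  have hpe : p ^ (e - 1) ≤ p ^ e := Nat.pow_le_pow_right (by omega) (by omega)
  have hpe' : p ^ e ≤ p ^ (e + 1) := Nat.pow_le_pow_right (by omega) (by omega)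
  have hdisj : i - p ^ (e - 1) + p ^ e < p ^ (e + 1) := by omega
  change Module.finrank K (wSubmodule K p i) = _
  rw [wSubmodule_eq_span_X_pow (by omega) (by omega), wExponents_eq hp he h1 h2,
    finrank_span_X_pow_image, card_range_union_Icc hdisj]
  omega

/-- Case 2 of the proof of Theorem 4.2 of the paper: for `i ≥ 2p + 1` with
`p^e ≤ i < p^{e+1}` (`e ≥ 1`) and `i < p^{e+1} − p^e + p^{e−1}`, the space
`W_i = V_2 + V_3` has dimension
`(i − p^{e−1} + p^e + 1) + (i − p^e + 1) = 2i − p^{e−1} + 2`. -/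
theorem dim_W_case2 (K : Type*) [Field K] (p : ℕ) [Fact p.Prime] [CharP K p]
    (e i : ℕ) (he : 1 ≤ e) (h1 : p ^ e ≤ i) (h2 : i < p ^ (e + 1))
    (hi : 2 * p + 1 ≤ i) (hc : i < p ^ (e + 1) - p ^ e + p ^ (e - 1)) :
    Module.finrank K
        (Submodule.span K
          ({f : K[X] | ∃ j : ℕ, j ≤ i - 1 ∧ f = X ^ (j + p)} ∪
            {f : K[X] | ∃ j k : ℕ, 1 ≤ k ∧ j + p ^ k ≤ i ∧
              f = X ^ j * (X ^ (p ^ (k + 1)) + X ^ (p ^ (k - 1)))} ∪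
            {f : K[X] | ∃ j : ℕ, j ≤ i - 1 - p ∧ f = X ^ j})) =
      (i - p ^ (e - 1) + p ^ e + 1) + (i - p ^ e + 1) :=
  dim_W_case2_general K p e i he h1 h2 hi hc
end

section
/- Let p ≥ 2 be an integer and let d : ℕ → ℝ be any function such that for every i ≥ p, writing e = ⌊log_p i⌋ (so p^e ≤ i < p^{e+1} and e ≥ 1), one has d(i) = 2i + p^{e+1} − p^e + 2 if p^{e+1} − p^e + p^{e−1} ≤ i, and d(i) = 3i − p^{e−1} + 3 if i < p^{e+1} − p^e + p^{e−1}. Then the limit of d(i)/i as i → ∞ does not exist; that is, there is no real number L such that the sequence i ↦ d(i)/i tends to L. -/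
/-!
Along `i = p^e` one is in the second regime, `d(i) = (3 - 1/p) i + 3`, while at the threshold
`i = p^{e-1} (p^2 - p + 1)` one is in the first, `d(i) = (3 - 1/(p^2 - p + 1)) i + 2`.
So `d(i)/i` has the two limit points `3 - 1/p` and `3 - 1/(p^2 - p + 1)`, which differ
because `p^2 - p + 1 - p = (p - 1)^2 > 0`.
-/

open Filter Topology

theorem tendsto_div_of_eventually_eq_mul_add {α : Type*} {l : Filter α} {x y : α → ℝ} {a c : ℝ}
    (hx : Tendsto x l atTop) (hy : ∀ᶠ t in l, y t = a * x t + c) :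
    Tendsto (fun t => y t / x t) l (𝓝 a) := by
  have hlim : Tendsto (fun t => a + c / x t) l (𝓝 a) := by
    simpa using tendsto_const_nhds.add (tendsto_const_nhds.div_atTop hx)
  refine hlim.congr' ?_
  filter_upwards [hy, hx.eventually_gt_atTop 0] with t hyt hxt
  rw [hyt]
  field_simp

theorem eq_of_tendsto_div_of_eq_mul_add {d : ℕ → ℝ} {L a c : ℝ}
    (hL : Tendsto (fun i : ℕ => d i / i) atTop (𝓝 L)) {u : ℕ → ℕ} (hu : Tendsto u atTop atTop)
    (hdu : ∀ k, d (u k) = a * u k + c) : L = a :=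
  tendsto_nhds_unique (hL.comp hu) <|
    tendsto_div_of_eventually_eq_mul_add (tendsto_natCast_atTop_atTop.comp hu)
      (Eventually.of_forall hdu)

def DimFormula (p : ℕ) (d : ℕ → ℝ) : Prop :=
  ∀ i : ℕ, p ≤ i →
    (p ^ (Nat.log p i + 1) - p ^ (Nat.log p i) + p ^ (Nat.log p i - 1) ≤ i →
      d i = 2 * i + (p : ℝ) ^ (Nat.log p i + 1) - (p : ℝ) ^ (Nat.log p i) + 2) ∧
    (i < p ^ (Nat.log p i + 1) - p ^ (Nat.log p i) + p ^ (Nat.log p i - 1) →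
      d i = 3 * i - (p : ℝ) ^ (Nat.log p i - 1) + 3)

/-- The paper's threshold `p^{e+1} - p^e + p^{e-1}` for `e = k + 1`. -/
def threshold (p k : ℕ) : ℕ := p ^ (k + 2) - p ^ (k + 1) + p ^ k

section

variable {p : ℕ} (hp : 2 ≤ p)
include hp

theorem pow_succ_lt_threshold (k : ℕ) : p ^ (k + 1) < threshold p k := by
  have h : 2 * p ^ (k + 1) ≤ p ^ (k + 2) := by
    rw [pow_succ p (k + 1), mul_comm]; exact Nat.mul_le_mul_left _ hp
  have : 1 ≤ p ^ k := Nat.one_le_pow _ _ (by omega)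
  unfold threshold; omega

theorem threshold_lt_pow (k : ℕ) : threshold p k < p ^ (k + 2) := by
  have h₁ : p ^ k < p ^ (k + 1) := Nat.pow_lt_pow_right (by omega) (by omega)
  have h₂ : p ^ (k + 1) ≤ p ^ (k + 2) := Nat.pow_le_pow_right (by omega) (by omega)
  unfold threshold; omega

theorem log_threshold (k : ℕ) : Nat.log p (threshold p k) = k + 1 :=
  Nat.log_eq_of_pow_le_of_lt_pow (pow_succ_lt_threshold hp k).le (threshold_lt_pow hp k)

theorem cast_threshold (k : ℕ) :
    (threshold p k : ℝ) = (p : ℝ) ^ k * ((p : ℝ) ^ 2 - p + 1) := by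
  have h : p ^ (k + 1) ≤ p ^ (k + 2) := Nat.pow_le_pow_right (by omega) (by omega)
  rw [threshold, Nat.cast_add, Nat.cast_sub h]
  push_cast
  ring

theorem tendsto_threshold : Tendsto (threshold p) atTop atTop :=
  tendsto_atTop_mono (fun k => (pow_succ_lt_threshold hp k).le)
    ((tendsto_pow_atTop_atTop_of_one_lt (by omega)).comp (tendsto_add_atTop_nat 1))

variable {d : ℕ → ℝ} (hd : DimFormula p d)
include hd

theorem DimFormula.apply_pow_succ (k : ℕ) :
    d (p ^ (k + 1)) = (3 - 1 / (p : ℝ)) * (p ^ (k + 1) : ℕ) + 3 := by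
  have hlog : Nat.log p (p ^ (k + 1)) = k + 1 := Nat.log_pow (by omega) _
  have hge : p ≤ p ^ (k + 1) := Nat.le_self_pow (by omega) _
  have h := (hd _ hge).2
  simp only [hlog, Nat.add_sub_cancel] at h
  rw [h (pow_succ_lt_threshold hp k)]
  have : (p : ℝ) ≠ 0 := by positivity
  push_cast
  field_simp
  ring

theorem DimFormula.apply_threshold (k : ℕ) :
    d (threshold p k) = (3 - 1 / ((p : ℝ) ^ 2 - p + 1)) * (threshold p k : ℕ) + 2 := by
  have hge : p ≤ threshold p k :=
    (Nat.le_self_pow (by omega) _).trans (pow_succ_lt_threshold hp k).le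
  have h := (hd _ hge).1
  simp only [log_threshold hp, Nat.add_sub_cancel] at h
  rw [h le_rfl, cast_threshold hp]
  have hm : (p : ℝ) ^ 2 - p + 1 ≠ 0 := by nlinarith
  have hinv : 1 / ((p : ℝ) ^ 2 - p + 1) * ((p : ℝ) ^ k * ((p : ℝ) ^ 2 - p + 1)) = (p : ℝ) ^ k := by
    rw [mul_comm, one_div, mul_assoc, mul_inv_cancel₀ hm, mul_one]
  linear_combination hinv

end

/-- Conclusion of Theorem 4.2 of the paper: if `d : ℕ → ℝ` satisfies, for every `i ≥ p`
(writing `e = ⌊log_p i⌋`, so `p^e ≤ i < p^{e+1}` and `e ≥ 1`),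
`d(i) = 2i + p^{e+1} − p^e + 2` when `p^{e+1} − p^e + p^{e−1} ≤ i` and
`d(i) = 3i − p^{e−1} + 3` when `i < p^{e+1} − p^e + p^{e−1}`, then the limit of
`d(i)/i` as `i → ∞` does not exist. -/
theorem limit_does_not_exist (p : ℕ) (hp : 2 ≤ p) (d : ℕ → ℝ)
    (hd : ∀ i : ℕ, p ≤ i →
      (p ^ (Nat.log p i + 1) - p ^ (Nat.log p i) + p ^ (Nat.log p i - 1) ≤ i →
        d i = 2 * i + (p : ℝ) ^ (Nat.log p i + 1) - (p : ℝ) ^ (Nat.log p i) + 2) ∧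
      (i < p ^ (Nat.log p i + 1) - p ^ (Nat.log p i) + p ^ (Nat.log p i - 1) →
        d i = 3 * i - (p : ℝ) ^ (Nat.log p i - 1) + 3)) :
    ¬ ∃ L : ℝ, Filter.Tendsto (fun i : ℕ => d i / i) Filter.atTop (nhds L) := by
  rintro ⟨L, hL⟩
  have hpow : L = 3 - 1 / (p : ℝ) :=
    eq_of_tendsto_div_of_eq_mul_add hL
      ((tendsto_pow_atTop_atTop_of_one_lt (by omega)).comp (tendsto_add_atTop_nat 1))
      (DimFormula.apply_pow_succ hp hd)
  have hthr : L = 3 - 1 / ((p : ℝ) ^ 2 - p + 1) :=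
    eq_of_tendsto_div_of_eq_mul_add hL (tendsto_threshold hp) (DimFormula.apply_threshold hp hd)
  have hp' : (2 : ℝ) ≤ p := by exact_mod_cast hp
  have hinv : 1 / (p : ℝ) = 1 / ((p : ℝ) ^ 2 - p + 1) := by linarith
  rw [one_div, one_div, inv_inj] at hinv
  nlinarith
end
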